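/- arXiv:1709.07531 — 5 statements merged into one kernel-verified Lean document; each statement's English description precedes it below -/
import Mathlib

section
/- Let Q be an n×n complex matrix indexed by a finite set A whose spectral radius of |Q| (entrywise absolute values) is strictly less than 1. For x,y ∈ A define the Green's function G_A(x,y) = Σ_{k≥0} (Q^k)(x,y). Then for any enumeration A = {x_1,…,x_n}, the product Π_{j=1}^n G_{A_j}(x_j,x_j), where A_j = A \ {x_1,…,x_{j-1}} and G_{A_j} is the Green's function of Q restricted to A_j, is independent of the enumeration; i.e., for any permutation σ of {1,…,n}, Π_j G_{A_j^σ}(x_{σ(j)},x_{σ(j)}) = Π_j G_{A_j}(x_j,x_j). -/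
open scoped BigOperators

/-- The Green's function `G(x,y) = Σ_{k≥0} (M^k)(x,y)`. -/
noncomputable def green {A : Type*} [Fintype A] [DecidableEq A] (M : Matrix A A ℂ) (x y : A) : ℂ :=
  ∑' k : ℕ, (M ^ k) x y

/-- All eigenvalues of `M` have modulus strictly less than one. -/
def SpecLtOne {A : Type*} [Fintype A] [DecidableEq A] (M : Matrix A A ℂ) : Prop :=
  ∀ z ∈ spectrum ℂ M, ‖z‖ < 1

/-- Integrability: spectral radius of entrywise `|Q|` is `< 1`. -/
def IntegrableWeight {A : Type*} [Fintype A] [DecidableEq A] (Q : Matrix A A ℂ) : Prop :=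
  SpecLtOne (Matrix.of fun x y => (‖Q x y‖ : ℂ))

/-- The diagonal Green's function `G_B(x,x)` of the restriction of `Q` to `B`. -/
noncomputable def greenIn {A : Type*} [Fintype A] [DecidableEq A] (Q : Matrix A A ℂ)
    (B : Finset A) (x : A) : ℂ :=
  if h : x ∈ B then
    green (Q.submatrix (fun i : {a // a ∈ B} => (i : A)) (fun i : {a // a ∈ B} => (i : A)))
      ⟨x, h⟩ ⟨x, h⟩
  else 0

/-- `A_j = A \ {x_1, …, x_{j-1}}` for the enumeration `e`. -/
def remaining {A : Type*} [Fintype A] [DecidableEq A] {n : ℕ} (e : Fin n → A) (j : Fin n) :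
    Finset A :=
  Finset.univ.filter (fun a => ∀ i : Fin n, i < j → e i ≠ a)

/-!
By Cramer's rule, for `x ∈ B` the diagonal Green's function is a ratio of principal minors,
`G_B(x,x) = det (I - Q_{B ∖ {x}}) / det (I - Q_B)`. Along any enumeration the product therefore
telescopes to `det (I - Q_∅) / det (I - Q_A) = 1 / det (I - Q)`, which does not depend on the
enumeration. The Neumann series defining `G_B` converges because `|(Q_B ^ k)(x,y)|` is dominated
by `(|Q| ^ k)(x,y)`, and Gelfand's formula makes `‖|Q| ^ k‖` decay geometrically.
-/

open Filter Finset
open scoped NNReal ENNReal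

theorem summable_of_eventually_rpow_one_div_lt {f : ℕ → ℝ} (hf : ∀ n, 0 ≤ f n) {c : ℝ≥0}
    (hc : c < 1) (h : ∀ᶠ n : ℕ in atTop, f n ^ (1 / n : ℝ) < c) : Summable f := by
  refine Summable.of_norm_bounded_eventually_nat (summable_geometric_of_lt_one c.2 hc) ?_
  filter_upwards [h, eventually_ne_atTop 0] with n hn hn0
  rw [Real.norm_of_nonneg (hf n), ← Real.rpow_inv_natCast_pow (hf n) hn0, ← one_div]
  exact pow_le_pow_left₀ (Real.rpow_nonneg (hf n) _) hn.le n

theorem summable_norm_pow_of_forall_spectrum_norm_lt_one {𝔸 : Type*} [NormedRing 𝔸]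
    [NormedAlgebra ℂ 𝔸] [CompleteSpace 𝔸] {a : 𝔸} (ha : ∀ z ∈ spectrum ℂ a, ‖z‖ < 1) :
    Summable fun n : ℕ => ‖a ^ n‖ := by
  cases subsingleton_or_nontrivial 𝔸
  · simp [Subsingleton.elim _ (0 : 𝔸)]
  have hρ : spectralRadius ℂ a < (1 : ℝ≥0) :=
    spectrum.spectralRadius_lt_of_forall_lt a fun z hz => by exact_mod_cast ha z hz
  obtain ⟨c, hρc, hc1⟩ := ENNReal.lt_iff_exists_nnreal_btwn.mp hρ
  refine summable_of_eventually_rpow_one_div_lt (fun n => norm_nonneg _) (mod_cast hc1) ?_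
  filter_upwards [(spectrum.pow_norm_pow_one_div_tendsto_nhds_spectralRadius a).eventually_lt_const
    hρc] with n hn
  exact (ENNReal.ofReal_lt_iff_lt_toReal (by positivity) ENNReal.coe_ne_top).mp hn

theorem Finset.prod_range_div_of_ne_zero {K : Type*} [CommGroupWithZero K] {g : ℕ → K}
    (hg : ∀ m, g m ≠ 0) (n : ℕ) : ∏ m ∈ range n, g (m + 1) / g m = g n / g 0 := by
  induction n with
  | zero => simp [hg 0]
  | succ n ih => rw [prod_range_succ, ih, mul_comm, div_mul_div_cancel₀ (hg n)]

namespace Matrix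

variable {ι ι' κ : Type*} [DecidableEq ι]

theorem norm_pow_apply_le_of_norm_le [Fintype ι] [Fintype κ] [DecidableEq κ] {R : Type*}
    [NormedRing R] [NormOneClass R] {M : Matrix ι ι R} {P : Matrix κ κ ℝ} {f : ι → κ}
    (hf : Function.Injective f) (hP : ∀ i j, 0 ≤ P i j) (hMP : ∀ i j, ‖M i j‖ ≤ P (f i) (f j)) (k : ℕ) (i j : ι) :
    ‖(M ^ k) i j‖ ≤ (P ^ k) (f i) (f j) := by
  induction k generalizing j with
  | zero =>
    rcases eq_or_ne i j with rfl | hij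
    · simp
    · simp [one_apply_ne hij, one_apply_ne (hf.ne hij)]
  | succ k ih =>
    rw [pow_succ, pow_succ, mul_apply, mul_apply]
    calc ‖∑ l, (M ^ k) i l * M l j‖ ≤ ∑ l, (P ^ k) (f i) (f l) * P (f l) (f j) :=
          (norm_sum_le _ _).trans <| sum_le_sum fun l _ => (norm_mul_le _ _).trans <|
            mul_le_mul (ih l) (hMP l j) (norm_nonneg _) (pow_apply_nonneg hP k _ _)
      _ = ∑ m ∈ univ.map ⟨f, hf⟩, (P ^ k) (f i) m * P m (f j) := by rw [sum_map]; rfl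
      _ ≤ ∑ m, (P ^ k) (f i) m * P m (f j) :=
          sum_le_univ_sum_of_nonneg fun m => mul_nonneg (pow_apply_nonneg hP k _ _) (hP _ _)

variable {R : Type*} [CommRing R]

theorem one_sub_submatrix [DecidableEq κ] (N : Matrix κ κ R) {f : ι → κ}
    (hf : Function.Injective f) : 1 - N.submatrix f f = (1 - N).submatrix f f := by
  rw [submatrix_sub, Pi.sub_apply, Pi.sub_apply, submatrix_one _ hf]

theorem adjugate_apply_self [Fintype ι] (N : Matrix ι ι R) (x : ι) :
    N.adjugate x x = (N.submatrix ((↑) : {y // y ≠ x} → ι) (↑)).det := by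
  have hx : ∀ u : {y // ¬y ≠ x}, (u : ι) = x := fun u => not_ne_iff.mp u.2
  have : Unique {y // ¬y ≠ x} := ⟨⟨⟨x, not_not.mpr rfl⟩⟩, fun u => Subtype.ext (hx u)⟩
  have hblocks : (N.updateRow x (Pi.single x 1)).submatrix (Equiv.sumCompl _) (Equiv.sumCompl _) =
      fromBlocks (N.submatrix ((↑) : {y // y ≠ x} → ι) (↑))
        (of fun (i : {y // y ≠ x}) (_ : {y // ¬y ≠ x}) => N i x) 0 1 := by
    ext (i | u) (j | u')
    · simp [updateRow_ne i.2]
    · simp [updateRow_ne i.2, hx u']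
    · simp [hx u, j.2]
    · simp [hx u', Subsingleton.elim u u']
  rw [adjugate_apply, ← det_submatrix_equiv_self (Equiv.sumCompl fun y => y ≠ x), hblocks,
    det_fromBlocks_zero₂₁, det_one, mul_one]

theorem det_submatrix_eq_of_range_eq [Fintype ι] [Fintype ι'] [DecidableEq ι']
    (N : Matrix κ κ R) {f : ι → κ} {g : ι' → κ} (hf : Function.Injective f)
    (hg : Function.Injective g) (h : Set.range f = Set.range g) : (N.submatrix f f).det = (N.submatrix g g).det := by
  let ε : ι ≃ ι' :=
    (Equiv.ofInjective f hf).trans ((Equiv.setCongr h).trans (Equiv.ofInjective g hg).symm)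
  have hε : g ∘ ε = f := funext fun i => by simp [ε, Equiv.apply_ofInjective_symm]
  rw [← hε, ← submatrix_submatrix, det_submatrix_equiv_self]

end Matrix

theorem green_eq_inv_one_sub_apply {ι : Type*} [Fintype ι] [DecidableEq ι] {M : Matrix ι ι ℂ}
    (hM : Summable (M ^ ·)) (x y : ι) : green M x y = (1 - M)⁻¹ x y := by
  rw [Matrix.inv_eq_right_inv hM.one_sub_mul_tsum_pow, green, ← tsum_apply (Pi.summable.1 hM x),
    ← tsum_apply hM]
  rfl

section PrincipalMinor

variable {A : Type*} [DecidableEq A]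

def principalMinor {R : Type*} [CommRing R] (N : Matrix A A R) (B : Finset A) : R :=
  (N.submatrix ((↑) : B → A) ((↑) : B → A)).det

theorem principalMinor_empty {R : Type*} [CommRing R] (N : Matrix A A R) :
    principalMinor N ∅ = 1 :=
  Matrix.det_isEmpty

theorem principalMinor_univ [Fintype A] {R : Type*} [CommRing R] (N : Matrix A A R) :
    principalMinor N univ = N.det :=
  Matrix.det_submatrix_equiv_self (Equiv.subtypeUnivEquiv mem_univ) N

theorem inv_submatrix_apply_self {K : Type*} [Field K] (N : Matrix A A K) {B : Finset A} {x : A}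
    (hx : x ∈ B) :
    (N.submatrix ((↑) : B → A) ((↑) : B → A))⁻¹ ⟨x, hx⟩ ⟨x, hx⟩ =
      principalMinor N (B.erase x) / principalMinor N B := by
  have hrange : Set.range (((↑) : B → A) ∘ ((↑) : {y : B // y ≠ ⟨x, hx⟩} → B)) =
      Set.range ((↑) : B.erase x → A) := by
    ext a
    simp [and_comm]
  rw [Matrix.inv_def, Matrix.smul_apply, Matrix.adjugate_apply_self, Matrix.submatrix_submatrix,
    Matrix.det_submatrix_eq_of_range_eq N (Subtype.val_injective.comp Subtype.val_injective)
      Subtype.val_injective hrange, Ring.inverse_eq_inv', smul_eq_mul, div_eq_inv_mul]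
  rfl

end PrincipalMinor

namespace IntegrableWeight

variable {A : Type*} [Fintype A] [DecidableEq A] {Q : Matrix A A ℂ}

section

-- Gelfand's formula needs a Banach-algebra norm on matrices; any one will do.
attribute [local instance] Matrix.linftyOpNormedRing Matrix.linftyOpNormedAlgebra

theorem summable_pow_norm_apply (hQ : IntegrableWeight Q) (x y : A) :
    Summable fun k : ℕ => ((Matrix.of fun a b => ‖Q a b‖) ^ k) x y := by
  have hP := (summable_norm_pow_of_forall_spectrum_norm_lt_one hQ).of_norm
  have hmap : (Matrix.of fun a b => (‖Q a b‖ : ℂ)) =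
      (Matrix.of fun a b => ‖Q a b‖).map Complex.ofRealHom := rfl
  rw [hmap] at hP
  refine Complex.summable_ofReal.mp ?_
  simpa [← Matrix.map_pow] using Pi.summable.1 (Pi.summable.1 hP x) y

end

theorem summable_pow_submatrix (hQ : IntegrableWeight Q) (B : Finset A) :
    Summable fun k : ℕ => Q.submatrix ((↑) : B → A) ((↑) : B → A) ^ k :=
  Pi.summable.2 fun (x : B) => Pi.summable.2 fun (y : B) =>
    (hQ.summable_pow_norm_apply x y).of_norm_bounded fun k =>
      Matrix.norm_pow_apply_le_of_norm_le (P := .of fun a b => ‖Q a b‖) Subtype.val_injective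
        (fun a b => norm_nonneg (Q a b)) (fun _ _ => le_rfl) k x y

theorem principalMinor_one_sub_ne_zero (hQ : IntegrableWeight Q) (B : Finset A) :
    principalMinor (1 - Q) B ≠ 0 := by
  rw [principalMinor, ← Matrix.one_sub_submatrix _ Subtype.val_injective]
  exact (Matrix.isUnit_det_of_right_inverse
    (hQ.summable_pow_submatrix B).one_sub_mul_tsum_pow).ne_zero

theorem greenIn_eq_div (hQ : IntegrableWeight Q) {B : Finset A} {x : A} (hx : x ∈ B) :
    greenIn Q B x = principalMinor (1 - Q) (B.erase x) / principalMinor (1 - Q) B := by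
  rw [greenIn, dif_pos hx, green_eq_inv_one_sub_apply (hQ.summable_pow_submatrix B),
    Matrix.one_sub_submatrix _ Subtype.val_injective, inv_submatrix_apply_self]

end IntegrableWeight

section Enumeration

variable {A : Type*} [Fintype A] [DecidableEq A] {n : ℕ} {e : Fin n → A}

-- `remaining e j` with a cutoff in `ℕ`, so that it may run up to `n`.
def remainingAfter (e : Fin n → A) (m : ℕ) : Finset A :=
  univ.filter fun a => ∀ i : Fin n, (i : ℕ) < m → e i ≠ a

theorem remaining_eq_remainingAfter (e : Fin n → A) (j : Fin n) :
    remaining e j = remainingAfter e j :=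
  rfl

theorem remainingAfter_zero (e : Fin n → A) : remainingAfter e 0 = univ := by
  simp [remainingAfter]

theorem remainingAfter_eq_empty (he : Function.Surjective e) : remainingAfter e n = ∅ := by
  refine eq_empty_iff_forall_notMem.2 fun a ha => ?_
  obtain ⟨i, rfl⟩ := he a
  exact (mem_filter.1 ha).2 i i.2 rfl

theorem mem_remainingAfter_self (he : Function.Injective e) (j : Fin n) :
    e j ∈ remainingAfter e j := by
  simp only [remainingAfter, mem_filter, mem_univ, true_and]
  exact fun i hi => he.ne (Fin.ne_of_lt hi)

theorem remainingAfter_erase (e : Fin n → A) (j : Fin n) :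
    (remainingAfter e j).erase (e j) = remainingAfter e (j + 1) := by
  ext a
  simp only [remainingAfter, mem_erase, mem_filter, mem_univ, true_and, Nat.lt_succ_iff_lt_or_eq]
  constructor
  · rintro ⟨hne, h⟩ i (hi | hi)
    · exact h i hi
    · rw [Fin.ext hi]
      exact hne.symm
  · intro h
    exact ⟨(h j (.inr rfl)).symm, fun i hi => h i (.inl hi)⟩

end Enumeration

theorem IntegrableWeight.prod_greenIn_remaining {A : Type*} [Fintype A] [DecidableEq A]
    {Q : Matrix A A ℂ} (hQ : IntegrableWeight Q) {n : ℕ} (e : Fin n ≃ A) :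
    ∏ j : Fin n, greenIn Q (remaining e j) (e j) = (1 - Q).det⁻¹ := by
  calc ∏ j : Fin n, greenIn Q (remaining e j) (e j)
      = ∏ m ∈ range n, principalMinor (1 - Q) (remainingAfter e (m + 1)) /
          principalMinor (1 - Q) (remainingAfter e m) := by
        rw [← Fin.prod_univ_eq_prod_range]
        refine prod_congr rfl fun j _ => ?_
        rw [remaining_eq_remainingAfter, hQ.greenIn_eq_div (mem_remainingAfter_self e.injective j),
          remainingAfter_erase]
    _ = principalMinor (1 - Q) (remainingAfter e n) / principalMinor (1 - Q) (remainingAfter e 0) :=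
        prod_range_div_of_ne_zero (fun m => hQ.principalMinor_one_sub_ne_zero _) n
    _ = (1 - Q).det⁻¹ := by
        rw [remainingAfter_eq_empty e.surjective, remainingAfter_zero, principalMinor_empty,
          principalMinor_univ, one_div]

/-- The product `Π_j G_{A_j}(x_j,x_j)` is independent of the enumeration of `A`. -/
theorem stmt0 {A : Type*} [Fintype A] [DecidableEq A] (Q : Matrix A A ℂ)
    (hQ : IntegrableWeight Q) (n : ℕ) (e : Fin n ≃ A) (σ : Equiv.Perm (Fin n)) :
    ∏ j : Fin n, greenIn Q (remaining (⇑(σ.trans e)) j) (e (σ j)) =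
      ∏ j : Fin n, greenIn Q (remaining (⇑e) j) (e j) :=
  (hQ.prod_greenIn_remaining (σ.trans e)).trans (hQ.prod_greenIn_remaining e).symm
end

section
/- Let Q be an n×n complex matrix all of whose eigenvalues have modulus strictly less than 1, indexed by A = {x_1,…,x_n}, and suppose each principal submatrix Q_{A_j} (with A_j = A \ {x_1,…,x_{j-1}}) also has all eigenvalues of modulus < 1. Then Π_{j=1}^n G_{A_j}(x_j,x_j) = det((I − Q)^{-1}) = 1/det(I − Q), where G_B = (I − Q_B)^{-1}. -/
open scoped BigOperators

/-! If every eigenvalue of `M` has modulus `< 1`, Gelfand's formula makes the Neumann series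
`Σ Mᵏ` converge, so `green M = (1 - M)⁻¹`. By Cramer's rule the diagonal entry of this inverse at
`x` is `det (1 - M)` with row and column `x` deleted, divided by `det (1 - M)`. Hence
`G_{A_j}(x_j, x_j) = det (I - Q_{A_{j+1}}) / det (I - Q_{A_j})`, and the product telescopes to
`det (I - Q_∅) / det (I - Q) = 1 / det (I - Q)`. -/

open Filter

section BanachAlgebra

variable {𝔸 : Type*} [NormedRing 𝔸] [NormedAlgebra ℂ 𝔸] [CompleteSpace 𝔸]

theorem spectralRadius_lt_one_of_forall_norm_lt_one {a : 𝔸}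
    (h : ∀ z ∈ spectrum ℂ a, ‖z‖ < 1) : spectralRadius ℂ a < 1 := by
  rcases subsingleton_or_nontrivial 𝔸 with _ | _
  · simp [spectrum.SpectralRadius.of_subsingleton]
  · exact_mod_cast spectrum.spectralRadius_lt_of_forall_lt a fun z hz => by exact_mod_cast h z hz

-- Gelfand's formula makes `‖a ^ n‖` eventually smaller than `c ^ n` for any `c` above the
-- spectral radius.
theorem summable_pow_of_spectralRadius_lt_one {a : 𝔸} (h : spectralRadius ℂ a < 1) :
    Summable (a ^ ·) := by
  obtain ⟨c, hρc, hc1⟩ := ENNReal.lt_iff_exists_nnreal_btwn.mp h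
  have hc1' : (c : ℝ) < 1 := by exact_mod_cast hc1
  have hroot : ∀ᶠ n : ℕ in atTop, (‖a ^ n‖₊ : ENNReal) ^ (1 / n : ℝ) < c :=
    eventually_lt_of_limsup_lt
      ((spectrum.limsup_pow_nnnorm_pow_one_div_le_spectralRadius a).trans_lt hρc)
  refine Summable.of_norm_bounded_eventually_nat (summable_geometric_of_lt_one c.2 hc1') ?_
  filter_upwards [hroot, eventually_gt_atTop 0] with n hn hn0
  have hnR : (0 : ℝ) < n := by exact_mod_cast hn0
  have := ENNReal.rpow_lt_rpow hn hnR
  rw [← ENNReal.rpow_mul, one_div, inv_mul_cancel₀ hnR.ne', ENNReal.rpow_one,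
    ENNReal.rpow_natCast] at this
  exact_mod_cast this.le

end BanachAlgebra

section Matrix

variable {ι : Type*} [Fintype ι] [DecidableEq ι]

attribute [local instance] Matrix.linftyOpNormedRing Matrix.linftyOpNormedAlgebra

theorem SpecLtOne.summable_pow {M : Matrix ι ι ℂ} (h : SpecLtOne M) : Summable (M ^ ·) :=
  summable_pow_of_spectralRadius_lt_one (spectralRadius_lt_one_of_forall_norm_lt_one h)

theorem SpecLtOne.green_eq_inv {M : Matrix ι ι ℂ} (h : SpecLtOne M) (x y : ι) :
    green M x y = (1 - M)⁻¹ x y := by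
  have hs := h.summable_pow
  rw [Matrix.inv_eq_right_inv hs.one_sub_mul_tsum_pow]
  exact (Pi.hasSum.mp (Pi.hasSum.mp hs.hasSum x) y).tsum_eq

theorem SpecLtOne.det_one_sub_ne_zero {M : Matrix ι ι ℂ} (h : SpecLtOne M) :
    (1 - M).det ≠ 0 := by
  have h1 : (1 : ℂ) ∉ spectrum ℂ M := fun h1 => (h 1 h1).ne (by simp)
  rw [spectrum.notMem_iff, map_one, Matrix.isUnit_iff_isUnit_det] at h1
  exact h1.ne_zero

end Matrix

namespace Matrix

variable {ι R : Type*} [Fintype ι] [DecidableEq ι] [CommRing R]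

theorem adjugate_apply_self_s1 (M : Matrix ι ι R) (i : ι) :
    M.adjugate i i = (M.toSquareBlockProp (· ≠ i)).det := by
  rw [adjugate_apply, twoBlockTriangular_det' _ (· = i) (fun j hj k hk => by simp_all),
    ← one_mul (M.toSquareBlockProp _).det]
  congr 1
  · convert det_eq_elem_of_subsingleton _ (⟨i, rfl⟩ : {j // j = i})
    simp [toSquareBlockProp_def]
  · congr 1
    ext j k
    simp [toSquareBlockProp_def, updateRow_ne j.2]

abbrev principal (M : Matrix ι ι R) (S : Finset ι) : Matrix S S R :=
  M.submatrix (↑) (↑)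

omit [Fintype ι] in
theorem adjugate_principal_apply_self (M : Matrix ι ι R) {S : Finset ι} {x : ι} (hx : x ∈ S) :
    (M.principal S).adjugate ⟨x, hx⟩ ⟨x, hx⟩ = (M.principal (S.erase x)).det := by
  let τ : S.erase x ≃ {j : S // j ≠ ⟨x, hx⟩} :=
    { toFun := fun a => ⟨⟨a, Finset.mem_of_mem_erase a.2⟩,
        fun h => Finset.ne_of_mem_erase a.2 (congrArg Subtype.val h)⟩
      invFun := fun j => ⟨j.1, Finset.mem_erase.mpr ⟨fun h => j.2 (Subtype.ext h), j.1.2⟩⟩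
      left_inv := fun _ => rfl
      right_inv := fun _ => rfl }
  rw [adjugate_apply_self_s1, ← det_submatrix_equiv_self τ]
  rfl

theorem det_principal_univ (M : Matrix ι ι R) : (M.principal Finset.univ).det = M.det :=
  M.det_submatrix_equiv_self (Equiv.subtypeUnivEquiv Finset.mem_univ)

end Matrix

theorem greenIn_mul_det {A : Type*} [Fintype A] [DecidableEq A] (Q : Matrix A A ℂ)
    {S : Finset A} {x : A} (hx : x ∈ S) (hS : SpecLtOne (Q.principal S)) :
    greenIn Q S x * ((1 - Q).principal S).det = ((1 - Q).principal (S.erase x)).det := by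
  have hsub : (1 - Q).principal S = 1 - Q.principal S := by
    ext i j
    simp only [Matrix.principal, Matrix.sub_apply, Matrix.submatrix_apply, Matrix.one_apply,
      Subtype.ext_iff]
  rw [greenIn, dif_pos hx, hS.green_eq_inv, hsub, Matrix.inv_def, Matrix.smul_apply, smul_eq_mul,
    Ring.inverse_eq_inv', mul_right_comm, inv_mul_cancel₀ hS.det_one_sub_ne_zero, one_mul, ← hsub,
    Matrix.adjugate_principal_apply_self]

theorem Fin.prod_mul_eq_of_mul_eq {M : Type*} [CommMonoid M] :
    ∀ {n : ℕ} (g : Fin n → M) (d : ℕ → M), (∀ j : Fin n, g j * d j = d (j + 1)) →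
      (∏ j, g j) * d 0 = d n
  | 0, _, _, _ => by simp
  | n + 1, g, d, hstep => by
    rw [Fin.prod_univ_castSucc, mul_right_comm,
      Fin.prod_mul_eq_of_mul_eq _ d fun j => hstep j.castSucc, mul_comm]
    exact hstep (Fin.last n)

section Enumeration

variable {A : Type*} [Fintype A] {n : ℕ} (e : Fin n ≃ A)

def tailFrom (j : ℕ) : Finset A :=
  Finset.univ.filter fun a => j ≤ (e.symm a : ℕ)

theorem remaining_eq_tailFrom [DecidableEq A] (j : Fin n) : remaining e j = tailFrom e j := by
  ext a
  simp only [remaining, tailFrom, Finset.mem_filter, Finset.mem_univ, true_and]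
  constructor
  · intro H
    by_contra! hlt
    exact H (e.symm a) (Fin.lt_def.mpr hlt) (e.apply_symm_apply a)
  · rintro hle i hi rfl
    simp only [Equiv.symm_apply_apply] at hle
    exact absurd hi (not_lt.mpr (Fin.le_def.mpr hle))

theorem tailFrom_zero : tailFrom e 0 = Finset.univ := by
  simp [tailFrom]

theorem tailFrom_self : tailFrom e n = ∅ := by
  simp [tailFrom, Finset.filter_eq_empty_iff, (e.symm _).isLt]

theorem apply_mem_tailFrom (j : Fin n) : e j ∈ tailFrom e j := by
  simp [tailFrom]

theorem tailFrom_succ [DecidableEq A] (j : Fin n) :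
    tailFrom e (j + 1) = (tailFrom e j).erase (e j) := by
  ext a
  simp only [tailFrom, Finset.mem_erase, Finset.mem_filter, Finset.mem_univ, true_and,
    ← e.symm_apply_eq.not, ← Fin.val_ne_iff]
  omega

end Enumeration

theorem stmt1_general {A : Type*} [Fintype A] [DecidableEq A] (Q : Matrix A A ℂ)
    (n : ℕ) (e : Fin n ≃ A)
    (h : ∀ j : Fin n,
      SpecLtOne (Q.submatrix (fun i : {a // a ∈ remaining (⇑e) j} => (i : A))
        (fun i : {a // a ∈ remaining (⇑e) j} => (i : A)))) :
    (∏ j : Fin n, greenIn Q (remaining (⇑e) j) (e j)) = Matrix.det (1 - Q)⁻¹ ∧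
      (∏ j : Fin n, greenIn Q (remaining (⇑e) j) (e j)) = 1 / Matrix.det (1 - Q) := by
  let D : ℕ → ℂ := fun j => ((1 - Q).principal (tailFrom e j)).det
  have hstep (j : Fin n) : greenIn Q (remaining e j) (e j) * D j = D (j + 1) := by
    simp only [D]
    rw [tailFrom_succ, remaining_eq_tailFrom]
    exact greenIn_mul_det Q (apply_mem_tailFrom e j) (remaining_eq_tailFrom e j ▸ h j)
  have htelescope := Fin.prod_mul_eq_of_mul_eq _ D hstep
  simp only [D] at htelescope
  rw [tailFrom_zero, Matrix.det_principal_univ, tailFrom_self,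
    Matrix.det_isEmpty (A := (1 - Q).principal ∅)] at htelescope
  have hprod := eq_one_div_of_mul_eq_one_left htelescope
  refine ⟨?_, hprod⟩
  rw [hprod, Matrix.det_nonsing_inv, Ring.inverse_eq_inv', one_div]

/-- `Π_j G_{A_j}(x_j,x_j) = det((I-Q)⁻¹) = 1/det(I-Q)` whenever all eigenvalues of `Q`
and of each principal submatrix `Q_{A_j}` have modulus `< 1`. -/
theorem stmt1 {A : Type*} [Fintype A] [DecidableEq A] (Q : Matrix A A ℂ)
    (n : ℕ) (e : Fin n ≃ A)
    (h0 : SpecLtOne Q)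
    (h : ∀ j : Fin n,
      SpecLtOne (Q.submatrix (fun i : {a // a ∈ remaining (⇑e) j} => (i : A))
        (fun i : {a // a ∈ remaining (⇑e) j} => (i : A)))) :
    (∏ j : Fin n, greenIn Q (remaining (⇑e) j) (e j)) = Matrix.det (1 - Q)⁻¹ ∧
      (∏ j : Fin n, greenIn Q (remaining (⇑e) j) (e j)) = 1 / Matrix.det (1 - Q) :=
  stmt1_general Q n e h
end

section
/- (Matrix-tree theorem via loop-erased walks) Let G = (V,E) be a finite connected simple graph with vertices {x_0,…,x_n}, let Δ be the combinatorial graph Laplacian restricted to rows and columns indexed by {x_1,…,x_n} (degree matrix minus adjacency matrix). Then the number of spanning trees of G equals det Δ. -/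
/-!
Let `A` be the signed vertex-edge incidence matrix of `G` with the row of `x₀` deleted. The
reduced Laplacian is `A * Aᵀ`, so by Cauchy–Binet its determinant is the sum, over the sets `s`
of `|V| - 1` edges, of the squared maximal minor of `A` on the columns `s`. If `s` does not
connect `V`, the indicator of a component missing `x₀` lies in the left kernel of the minor, which
therefore vanishes. If `s` is a spanning tree, match every `v ≠ x₀` with the edge to a neighbour
closer to `x₀`: ordered by distance from `x₀`, the minor becomes triangular with diagonal `±1`.
-/

open Finset Matrix Function

section CauchyBinet

variable {m E R : Type*} [Fintype m] [DecidableEq m] [Fintype E] [CommRing R]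

lemma Matrix.det_mul_eq_sum_prod_mul_det_submatrix (A : Matrix m E R) (B : Matrix E m R) :
    (A * B).det = ∑ g : m → E, (∏ i, B (g i) i) * (A.submatrix id g).det := by
  simp_rw [det_apply', mul_apply, prod_univ_sum, mul_sum, Fintype.piFinset_univ]
  rw [sum_comm]
  refine sum_congr rfl fun g _ => ?_
  refine sum_congr rfl fun σ _ => ?_
  simp only [submatrix_apply, id, prod_mul_distrib]
  ring

variable [DecidableEq E]

lemma Finset.sum_injective_image_eq_sum_perm {M : Type*} [AddCommMonoid M] {s : Finset E}
    (e : m ≃ s) (T : (m → E) → M) :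
    ∑ g with Injective g ∧ univ.image g = s, T g = ∑ σ : Equiv.Perm m, T (fun i => e (σ i)) := by
  have hcard : Fintype.card m = Fintype.card s := Fintype.card_congr e
  symm
  refine sum_bij (fun σ _ i => e (σ i)) (fun σ _ => ?_) (fun σ _ τ _ h => ?_) (fun g hg => ?_)
    (fun _ _ => rfl)
  · refine mem_filter.2 ⟨mem_univ _, fun i j h => σ.injective (e.injective (Subtype.ext h)), ?_⟩
    ext x
    refine ⟨fun hx => ?_, fun hx => ?_⟩
    · obtain ⟨i, -, rfl⟩ := mem_image.1 hx
      exact (e (σ i)).2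
    · exact mem_image.2 ⟨σ.symm (e.symm ⟨x, hx⟩), mem_univ _, by simp⟩
  · ext i
    exact e.injective (Subtype.ext (congrFun h i))
  · obtain ⟨hinj, himage⟩ := (mem_filter.1 hg).2
    have hmem : ∀ i, g i ∈ s := fun i => himage ▸ mem_image_of_mem g (mem_univ i)
    have hbij : Bijective fun i => (⟨g i, hmem i⟩ : s) :=
      (Fintype.bijective_iff_injective_and_card _).2
        ⟨fun i j h => hinj (congrArg Subtype.val h), hcard⟩
    exact ⟨(Equiv.ofBijective _ hbij).trans e.symm, mem_univ _, by ext; simp⟩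

theorem Matrix.det_mul_eq_sum_powersetCard (A : Matrix m E R) (B : Matrix E m R)
    (f : Finset E → R)
    -- the product of the two minors does not depend on the enumeration `e` of `s`
    (hf : ∀ s ∈ univ.powersetCard (Fintype.card m), ∃ e : m ≃ s,
      f s = (A.submatrix id fun i => (e i : E)).det * (B.submatrix (fun i => (e i : E)) id).det) :
    (A * B).det = ∑ s ∈ univ.powersetCard (Fintype.card m), f s := by
  set T : (m → E) → R := fun g => (∏ i, B (g i) i) * (A.submatrix id g).det
  have hinj : ∑ g with Injective g, T g = ∑ g, T g := by
    refine sum_filter_of_ne fun g _ hT => ?_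
    by_contra hg
    obtain ⟨i, j, hgij, hij⟩ := not_injective_iff.1 hg
    exact hT (mul_eq_zero_of_right _ (det_zero_of_column_eq hij fun k => by simp [hgij]))
  have himage : ∀ g ∈ ({g | Injective g} : Finset (m → E)), univ.image g ∈
      univ.powersetCard (Fintype.card m) := fun g hg => by
    rw [mem_powersetCard_univ, card_image_of_injective _ (mem_filter.1 hg).2, card_univ]
  rw [det_mul_eq_sum_prod_mul_det_submatrix, ← hinj, ← sum_fiberwise_of_maps_to himage]
  refine sum_congr rfl fun s hs => ?_
  obtain ⟨e, hfe⟩ := hf s hs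
  rw [hfe, filter_filter, sum_injective_image_eq_sum_perm e, det_apply' (B.submatrix _ id),
    mul_sum]
  refine sum_congr rfl fun σ _ => ?_
  have hσ : A.submatrix id (fun i => (e (σ i) : E)) =
      (A.submatrix id fun i => (e i : E)).submatrix id σ := rfl
  simp only [T, hσ, det_permute', submatrix_apply, id]
  ring

end CauchyBinet

lemma Matrix.BlockTriangular.det_eq_prod_diag {m α R : Type*} [Fintype m] [DecidableEq m]
    [CommRing R] [LinearOrder α] {M : Matrix m m R} {b : m → α} (hM : M.BlockTriangular b)
    (hb : Injective b) : M.det = ∏ i, M i i :=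
  letI : LinearOrder m := LinearOrder.lift' b hb
  det_of_isUpperTriangular hM

namespace SimpleGraph

variable {V R : Type*}

section EdgeSign

variable [LinearOrder V] [Ring R]

def edgeSign (v : V) (e : Sym2 V) : R :=
  (if v = e.inf then 1 else 0) - (if v = e.sup then 1 else 0)

lemma edgeSign_mk_of_le {a b : V} (hab : a ≤ b) (v : V) :
    (edgeSign v s(a, b) : R) = (if v = a then 1 else 0) - (if v = b then 1 else 0) := by
  simp [edgeSign, min_eq_left hab, max_eq_right hab]

lemma edgeSign_eq_zero_of_notMem {v : V} {e : Sym2 V} (h : v ∉ e) : (edgeSign v e : R) = 0 := by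
  induction e using Sym2.inductionOn with
  | hf a b =>
    simp only [Sym2.mem_iff, not_or] at h
    rcases le_total a b with hab | hab
    · simp [edgeSign_mk_of_le hab, h.1, h.2]
    · simp [Sym2.eq_swap (a := a), edgeSign_mk_of_le hab, h.1, h.2]

lemma edgeSign_right_eq_neg_left {a b : V} (h : a ≠ b) :
    (edgeSign b s(a, b) : R) = -edgeSign a s(a, b) := by
  rcases le_total a b with hab | hab
  · simp [edgeSign_mk_of_le hab, h, h.symm]
  · simp [Sym2.eq_swap (a := a), edgeSign_mk_of_le hab, h, h.symm]

lemma edgeSign_left_mul_self {a b : V} (h : a ≠ b) :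
    (edgeSign a s(a, b) : R) * edgeSign a s(a, b) = 1 := by
  rcases le_total a b with hab | hab
  · simp [edgeSign_mk_of_le hab, h]
  · simp [Sym2.eq_swap (a := a), edgeSign_mk_of_le hab, h]

lemma edgeSign_mul_edgeSign {u v : V} {e : Sym2 V} (he : ¬e.IsDiag) :
    (edgeSign u e : R) * edgeSign v e = if u ∈ e ∧ v ∈ e then (if u = v then 1 else -1) else 0 := by
  by_cases hu : u ∈ e
  swap
  · simp [edgeSign_eq_zero_of_notMem hu, hu]
  by_cases hv : v ∈ e
  swap
  · simp [edgeSign_eq_zero_of_notMem hv, hv]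
  obtain ⟨w, rfl⟩ := Sym2.mem_iff_exists.mp hu
  have huw : u ≠ w := fun h => he (by simp [h])
  rcases Sym2.mem_iff.mp hv with rfl | rfl
  · simp [edgeSign_left_mul_self huw]
  · simp [huw, edgeSign_right_eq_neg_left huw, edgeSign_left_mul_self huw]

end EdgeSign

section SignedIncMatrix

variable [LinearOrder V] [Ring R] (R) (G : SimpleGraph V) [DecidableRel G.Adj]

def signedIncMatrix : Matrix V (Sym2 V) R :=
  of fun v e => if e ∈ G.edgeSet then edgeSign v e else 0

lemma signedIncMatrix_apply_mul_signedIncMatrix_apply (u v : V) (e : Sym2 V) :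
    G.signedIncMatrix R u e * G.signedIncMatrix R v e =
      if e ∈ G.edgeSet ∧ u ∈ e ∧ v ∈ e then (if u = v then 1 else -1) else 0 := by
  by_cases he : e ∈ G.edgeSet
  · simp [signedIncMatrix, he, edgeSign_mul_edgeSign (G.not_isDiag_of_mem_edgeSet he)]
  · simp [signedIncMatrix, he]

theorem signedIncMatrix_mul_transpose [Fintype V] :
    G.signedIncMatrix R * (G.signedIncMatrix R)ᵀ = G.lapMatrix R := by
  ext u v
  simp only [mul_apply, transpose_apply, signedIncMatrix_apply_mul_signedIncMatrix_apply]
  rw [← Finset.sum_filter, sum_const, nsmul_eq_mul]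
  rcases eq_or_ne u v with rfl | huv
  · have : ({e | e ∈ G.edgeSet ∧ u ∈ e ∧ u ∈ e} : Finset (Sym2 V)) = G.incidenceFinset u := by
      ext e; simp [incidenceSet]
    simp only [this, card_incidenceFinset_eq_degree, if_true]
    simp [lapMatrix, degMatrix]
  · have : ({e | e ∈ G.edgeSet ∧ u ∈ e ∧ v ∈ e} : Finset (Sym2 V)) =
        ({s(u, v)} : Finset (Sym2 V)).filter (· ∈ G.edgeSet) := by
      ext e
      simp [Sym2.mem_and_mem_iff huv, and_comm]
    rw [this, filter_singleton, if_neg huv]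
    split_ifs with h <;> simp_all [lapMatrix, degMatrix]

lemma signedIncMatrix_submatrix_eq_of_forall_mem {ι κ : Type*} (f : ι → V) {g : κ → Sym2 V}
    (hg : ∀ j, g j ∈ G.edgeSet) :
    (G.signedIncMatrix R).submatrix f g = of fun i j => edgeSign (f i) (g j) := by
  ext i j
  simp [signedIncMatrix, hg j]

end SignedIncMatrix

lemma Connected.exists_adj_dist_add_one_eq {H : SimpleGraph V} (hH : H.Connected) {x₀ v : V}
    (hv : v ≠ x₀) : ∃ u, H.Adj v u ∧ H.dist x₀ u + 1 = H.dist x₀ v := by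
  obtain ⟨p, hp⟩ := hH.exists_walk_length_eq_dist v x₀
  obtain ⟨u, huv, q, rfl⟩ := Walk.exists_eq_cons_of_ne hv p
  have hq : H.dist u x₀ ≤ q.length := dist_le q
  have htri : H.dist v x₀ ≤ H.dist v u + H.dist u x₀ := hH.dist_triangle
  rw [dist_eq_one_iff_adj.2 huv] at htri
  rw [Walk.length_cons] at hp
  exact ⟨u, huv, by rw [dist_comm, dist_comm (u := x₀)]; omega⟩

section Minors

variable [LinearOrder V] [Fintype V] [CommRing R] {H : SimpleGraph V}

lemma sum_mul_edgeSign (c : V → R) {a b : V} (h : a ≠ b) :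
    ∑ v, c v * edgeSign v s(a, b) = (c a - c b) * edgeSign a s(a, b) := by
  rw [Fintype.sum_eq_add a b h fun v hv => by
    rw [edgeSign_eq_zero_of_notMem (by simp [hv.1, hv.2]), mul_zero],
    edgeSign_right_eq_neg_left h]
  ring

theorem det_edgeSign_eq_zero_of_not_connected [IsDomain R] (hH : ¬H.Connected) (x₀ : V)
    (g : {v // v ≠ x₀} → Sym2 V) (hg : ∀ j, g j ∈ H.edgeSet) :
    (of fun i j : {v // v ≠ x₀} => (edgeSign (i : V) (g j) : R)).det = 0 := by
  classical
  obtain ⟨v, hv⟩ : ∃ v, ¬H.Reachable x₀ v := by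
    by_contra! h
    exact hH (connected_iff_exists_forall_reachable H |>.2 ⟨x₀, h⟩)
  set c : V → R := fun u => if H.Reachable v u then 1 else 0
  have hc₀ : c x₀ = 0 := if_neg fun h => hv h.symm
  have hvx₀ : v ≠ x₀ := by rintro rfl; exact hv .rfl
  rw [← exists_vecMul_eq_zero_iff]
  refine ⟨fun i => c i, fun h => ?_, funext fun j => ?_⟩
  · simpa [c] using congrFun h ⟨v, hvx₀⟩
  · have hsum := Fintype.sum_eq_add_sum_subtype_ne (fun u => c u * edgeSign u (g j)) x₀
    rw [hc₀, zero_mul, zero_add] at hsum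
    simp only [vecMul, dotProduct, of_apply, Pi.zero_apply, ← hsum]
    induction h : g j using Sym2.inductionOn with
    | hf a b =>
      have hab : H.Adj a b := by rw [← mem_edgeSet, ← h]; exact hg j
      have hca : c a = c b := by
        have : H.Reachable v a ↔ H.Reachable v b :=
          ⟨fun h => h.trans hab.reachable, fun h => h.trans hab.symm.reachable⟩
        simp only [c, this]
      rw [sum_mul_edgeSign c hab.ne, hca, sub_self, zero_mul]

theorem Connected.exists_injective_det_edgeSign_sq_eq_one (hH : H.Connected) (x₀ : V) :
    ∃ g : {v // v ≠ x₀} → Sym2 V, Injective g ∧ (∀ j, g j ∈ H.edgeSet) ∧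
      (of fun i j : {v // v ≠ x₀} => (edgeSign (i : V) (g j) : R)).det ^ 2 = 1 := by
  choose parent hadj hdist using fun i : {v // v ≠ x₀} => hH.exists_adj_dist_add_one_eq i.2
  refine ⟨fun i => s(i, parent i), fun i j h => ?_, hadj, ?_⟩
  · rcases Sym2.eq_iff.1 h with ⟨hij, -⟩ | ⟨hij, hji⟩
    · exact Subtype.ext hij
    · have hi := hdist i
      have hj := hdist j
      rw [hji] at hi
      rw [← hij] at hj
      omega
  · set M : Matrix {v // v ≠ x₀} {v // v ≠ x₀} R := of fun i j => edgeSign (i : V) s(j, parent j)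
    have htri : M.BlockTriangular fun i => toLex (H.dist x₀ i, (i : V)) := by
      intro i j hji
      by_contra hne
      rcases Sym2.mem_iff.1 (not_imp_comm.1 edgeSign_eq_zero_of_notMem hne) with h | h
      · exact hji.ne (by rw [Subtype.ext h])
      · have hj := hdist j
        rw [← h] at hj
        have hle := (Prod.Lex.toLex_lt_toLex'.1 hji).1
        dsimp only at hle
        omega
    rw [htri.det_eq_prod_diag fun i j h => Subtype.ext (congrArg Prod.snd (toLex.injective h)),
      ← prod_pow]
    exact prod_eq_one fun i _ => by simpa [M, sq] using edgeSign_left_mul_self (R := R) (hadj i).ne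

end Minors

section MatrixTree

variable [Fintype V] [CommRing R] [IsDomain R]

open Classical in
lemma exists_equiv_det_sq_eq_ite [LinearOrder V] (G : SimpleGraph V) [DecidableRel G.Adj]
    (x₀ : V) {s : Finset (Sym2 V)} (hs : #s = Fintype.card V - 1) :
    ∃ e : {v // v ≠ x₀} ≃ s,
      (if ↑s ⊆ G.edgeSet ∧ (fromEdgeSet (s : Set (Sym2 V))).Connected then 1 else 0 : R) =
        ((G.signedIncMatrix R).submatrix (↑) fun j => (e j : Sym2 V)).det ^ 2 := by
  have hcard : Fintype.card {v // v ≠ x₀} = Fintype.card s := by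
    simp [Fintype.card_subtype_compl, hs]
  by_cases hsub : ↑s ⊆ G.edgeSet
  swap
  · obtain ⟨x, hxs, hxG⟩ := Set.not_subset.1 hsub
    let e := Fintype.equivOfCardEq hcard
    refine ⟨e, ?_⟩
    rw [if_neg fun h => hsub h.1, det_eq_zero_of_column_eq_zero (e.symm ⟨x, hxs⟩) fun i => by
      simp [signedIncMatrix, hxG], zero_pow two_ne_zero]
  set H := fromEdgeSet (s : Set (Sym2 V))
  have hH : H.edgeSet = s := by
    rw [edgeSet_fromEdgeSet, sdiff_eq_left]
    exact Set.disjoint_left.2 fun x hx => G.not_isDiag_of_mem_edgeSet (hsub hx)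
  by_cases hc : H.Connected
  · obtain ⟨g, hginj, hgH, hdet⟩ := hc.exists_injective_det_edgeSign_sq_eq_one (R := R) x₀
    rw [hH] at hgH
    have hbij : Bijective fun j => (⟨g j, hgH j⟩ : s) :=
      (Fintype.bijective_iff_injective_and_card _).2
        ⟨fun i j h => hginj (congrArg Subtype.val h), hcard⟩
    refine ⟨Equiv.ofBijective _ hbij, ?_⟩
    rw [if_pos ⟨hsub, hc⟩, ← hdet]
    exact congrArg (fun M : Matrix _ _ R => M.det ^ 2)
      (signedIncMatrix_submatrix_eq_of_forall_mem R G _ fun j => hsub (hgH j)).symm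
  · let e := Fintype.equivOfCardEq hcard
    refine ⟨e, ?_⟩
    rw [if_neg fun h => hc h.2,
      signedIncMatrix_submatrix_eq_of_forall_mem R G _ fun j => hsub (e j).2,
      det_edgeSign_eq_zero_of_not_connected hc x₀ _ fun j => hH ▸ (e j).2, zero_pow two_ne_zero]

open Classical in
theorem det_submatrix_lapMatrix_eq_card [DecidableEq V] (G : SimpleGraph V) [DecidableRel G.Adj]
    (x₀ : V) :
    ((G.lapMatrix R).submatrix (fun i : {v // v ≠ x₀} => (i : V)) (↑)).det =
      #{s : Finset (Sym2 V) | ↑s ⊆ G.edgeSet ∧ #s = Fintype.card V - 1 ∧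
        (fromEdgeSet (s : Set (Sym2 V))).Connected} := by
  let : LinearOrder V := LinearOrder.lift' _ (Fintype.equivFin V).injective
  set A := (G.signedIncMatrix R).submatrix (fun i : {v // v ≠ x₀} => (i : V)) id
  have hcard : Fintype.card {v // v ≠ x₀} = Fintype.card V - 1 := by
    simp [Fintype.card_subtype_compl]
  have hlap : (G.lapMatrix R).submatrix (fun i : {v // v ≠ x₀} => (i : V)) (↑) = A * Aᵀ := by
    rw [transpose_submatrix, ← submatrix_mul _ _ _ _ _ bijective_id, signedIncMatrix_mul_transpose]
    -- the `DecidableEq V` of the auxiliary order is not the given one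
    congr
    exact Subsingleton.elim _ _
  rw [hlap, det_mul_eq_sum_powersetCard A Aᵀ
    (fun s => if ↑s ⊆ G.edgeSet ∧ (fromEdgeSet (s : Set (Sym2 V))).Connected then 1 else 0)
    fun s hs => ?_, sum_boole, hcard]
  · congr 2
    ext s
    simp only [mem_filter, mem_powersetCard, subset_univ, true_and, mem_univ]
    tauto
  · obtain ⟨e, he⟩ := exists_equiv_det_sq_eq_ite (R := R) G x₀
      (hcard ▸ mem_powersetCard_univ.1 hs)
    refine ⟨e, ?_⟩
    rw [← transpose_submatrix, det_transpose, ← sq]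
    convert he using 3
    rfl

end MatrixTree

end SimpleGraph

theorem stmt9_general {V : Type*} [Fintype V] [DecidableEq V] (G : SimpleGraph V)
    [DecidableRel G.Adj] (x₀ : V) :
    (Set.ncard {T : Finset (Sym2 V) | ↑T ⊆ G.edgeSet ∧ T.card = Fintype.card V - 1 ∧
        (SimpleGraph.fromEdgeSet (↑T : Set (Sym2 V))).Connected} : ℝ) =
      Matrix.det ((G.lapMatrix ℝ).submatrix (fun i : {v : V // v ≠ x₀} => (i : V))
        (fun i : {v : V // v ≠ x₀} => (i : V))) := by
  rw [SimpleGraph.det_submatrix_lapMatrix_eq_card, ← Set.ncard_coe_finset]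
  congr 3
  ext T
  simp

/-- Kirchhoff's matrix-tree theorem: the number of spanning trees of a finite connected
simple graph equals the determinant of the combinatorial Laplacian with the row and
column of `x₀` deleted. -/
theorem stmt9 {V : Type*} [Fintype V] [DecidableEq V] (G : SimpleGraph V)
    [DecidableRel G.Adj] (hconn : G.Connected) (x₀ : V) :
    (Set.ncard {T : Finset (Sym2 V) | ↑T ⊆ G.edgeSet ∧ T.card = Fintype.card V - 1 ∧
        (SimpleGraph.fromEdgeSet (↑T : Set (Sym2 V))).Connected} : ℝ) =
      Matrix.det ((G.lapMatrix ℝ).submatrix (fun i : {v : V // v ≠ x₀} => (i : V))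
        (fun i : {v : V // v ≠ x₀} => (i : V))) :=
  stmt9_general G x₀
end

section
/- Let K be a positive integer and k_1,…,k_n positive integers with k_1 + ⋯ + k_n = 2K. Then Σ (2^B · K!)/(a_1!⋯a_n! · Π_{i<j} b_{ij}!) = (2K)!/(k_1!⋯k_n!), where the sum is over all nonnegative integers a_1,…,a_n and {b_{ij} : 1 ≤ i < j ≤ n} satisfying k_j = 2a_j + Σ_{i≠j} b_{ij} (with b_{ji} = b_{ij}), and B = Σ_{i<j} b_{ij}. -/
/-!
Expand `(∑ⱼ Xⱼ) ^ (2K) = ((∑ⱼ Xⱼ) ^ 2) ^ K` in two ways and compare the coefficients of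
`∏ⱼ Xⱼ ^ kⱼ`. Directly, the multinomial theorem gives `(2K)! / ∏ⱼ kⱼ!`. On the other hand
`(∑ⱼ Xⱼ) ^ 2` is the sum of the `n + n(n-1)/2` monomials `Xⱼ ^ 2` and `2 Xᵢ Xⱼ` (`i < j`), so
the multinomial theorem applied to these expresses the coefficient as a sum over the numbers
`aⱼ`, `bᵢⱼ` of times each monomial is chosen; the monomial `∏ⱼ Xⱼ ^ kⱼ` arises exactly when
`kⱼ = 2 aⱼ + ∑_{i ≠ j} bᵢⱼ`, with weight `2 ^ B · K! / (∏ aⱼ! ∏ bᵢⱼ!)`.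
-/

open Finset MvPolynomial

theorem MvPolynomial.coeff_sum_monomial_pow {ι τ R : Type*} [Fintype ι] [DecidableEq ι]
    [DecidableEq τ] [CommSemiring R] (e : ι → τ →₀ ℕ) (w : ι → R) (K : ℕ) (m : τ →₀ ℕ) :
    coeff m ((∑ t, monomial (e t) (w t)) ^ K) =
      ∑ c ∈ (univ.piAntidiag K).filter (fun c => ∑ t, c t • e t = m),
        (Nat.multinomial univ c : R) * ∏ t, w t ^ c t := by
  rw [sum_pow_eq_sum_piAntidiag, coeff_sum, sum_filter]
  refine sum_congr rfl fun c _ => ?_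
  simp_rw [monomial_pow, ← monomial_sum_prod, ← C_eq_coe_nat, coeff_C_mul, coeff_monomial,
    mul_ite, mul_zero]

theorem Nat.cast_multinomial {α 𝕜 : Type*} [Field 𝕜] [CharZero 𝕜] (s : Finset α) (f : α → ℕ) :
    (Nat.multinomial s f : 𝕜) = (∑ i ∈ s, f i).factorial / ∏ i ∈ s, ((f i).factorial : 𝕜) := by
  rw [eq_div_iff (prod_ne_zero_iff.mpr fun i _ => by exact_mod_cast (f i).factorial_ne_zero),
    mul_comm]
  exact_mod_cast Nat.multinomial_spec s f

abbrev LtPair (σ : Type*) [LT σ] := {p : σ × σ // p.1 < p.2}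

section LinearOrder

variable {σ : Type*} [LinearOrder σ]

section symmOfLtPair

variable {M : Type*} [Zero M]

def symmOfLtPair (β : LtPair σ → M) (i j : σ) : M :=
  if h : i < j then β ⟨(i, j), h⟩ else if h : j < i then β ⟨(j, i), h⟩ else 0

theorem symmOfLtPair_comm (β : LtPair σ → M) (i j : σ) :
    symmOfLtPair β i j = symmOfLtPair β j i := by
  unfold symmOfLtPair
  rcases lt_trichotomy i j with h | rfl | h
  · simp [h, h.not_gt]
  · rfl
  · simp [h, h.not_gt]

@[simp]
theorem symmOfLtPair_self (β : LtPair σ → M) (i : σ) : symmOfLtPair β i i = 0 := by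
  simp [symmOfLtPair]

@[simp]
theorem symmOfLtPair_ltPair (β : LtPair σ → M) (p : LtPair σ) :
    symmOfLtPair β p.1.1 p.1.2 = β p := by
  simp [symmOfLtPair, p.2]

theorem symmOfLtPair_restrict {b : σ → σ → M} (hb : ∀ i j, b i j = b j i)
    (hb₀ : ∀ i, b i i = 0) : symmOfLtPair (fun p : LtPair σ => b p.1.1 p.1.2) = b := by
  ext i j
  unfold symmOfLtPair
  rcases lt_trichotomy i j with h | rfl | h
  · simp [h]
  · simp [hb₀]
  · simp [h, h.not_gt, hb j i]

end symmOfLtPair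

/-- `inl j` indexes the monomial `Xⱼ ^ 2` of `(∑ⱼ Xⱼ) ^ 2`, and `inr (i, j)` the monomial
`2 Xᵢ Xⱼ`. -/
noncomputable def pairExponent : σ ⊕ LtPair σ → σ →₀ ℕ :=
  Sum.elim (fun j => Finsupp.single j 2) (fun p => Finsupp.single p.1.1 1 + Finsupp.single p.1.2 1)

def pairCoeff {R : Type*} [CommSemiring R] : σ ⊕ LtPair σ → R :=
  Sum.elim 1 (fun _ => 2)

theorem degree_pairExponent (t : σ ⊕ LtPair σ) : (pairExponent t).degree = 2 := by
  cases t <;> simp [pairExponent]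

variable [Fintype σ]

@[to_additive]
theorem prod_ltPair_eq_prod_filter {M : Type*} [CommMonoid M] (f : σ × σ → M) :
    ∏ p : LtPair σ, f p.1 = ∏ p ∈ univ.filter (fun p : σ × σ => p.1 < p.2), f p :=
  (prod_subtype _ (by simp) f).symm

theorem sum_sum_eq_sum_diag_add_two_nsmul_sum_ltPair {M : Type*} [AddCommMonoid M]
    (g : σ → σ → M) (hg : ∀ i j, g i j = g j i) :
    ∑ i, ∑ j, g i j = ∑ i, g i i + 2 • ∑ p : LtPair σ, g p.1.1 p.1.2 := by
  have split : ∀ i j, g i j = (if i = j then g i j else 0) + (if i < j then g i j else 0)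
      + (if j < i then g j i else 0) := by
    intro i j
    rcases lt_trichotomy i j with h | rfl | h
    · simp [h, h.ne, h.not_gt]
    · simp
    · simp [h, h.ne', h.not_gt, hg i j]
  have upper : ∑ i, ∑ j, (if i < j then g i j else 0) = ∑ p : LtPair σ, g p.1.1 p.1.2 := by
    rw [sum_ltPair_eq_sum_filter (fun p => g p.1 p.2), sum_filter, ← univ_product_univ,
      sum_product]
  calc ∑ i, ∑ j, g i j
      = ∑ i, ∑ j, ((if i = j then g i j else 0) + (if i < j then g i j else 0)
          + (if j < i then g j i else 0)) := by simp_rw [← split]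
    _ = ∑ i, g i i + 2 • ∑ p : LtPair σ, g p.1.1 p.1.2 := by
      simp only [sum_add_distrib, sum_ite_eq, mem_univ, if_true]
      rw [sum_comm (f := fun i j => if j < i then g j i else 0), upper, two_nsmul, add_assoc]

theorem sum_X_sq {R : Type*} [CommSemiring R] :
    (∑ j, X j : MvPolynomial σ R) ^ 2 = ∑ t, monomial (pairExponent t) (pairCoeff t) := by
  rw [sq, sum_mul_sum, sum_sum_eq_sum_diag_add_two_nsmul_sum_ltPair _ fun i j => mul_comm _ _,
    Fintype.sum_sum_type, smul_sum]
  congr 1 <;> refine sum_congr rfl fun t _ => ?_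
  · simp [pairExponent, pairCoeff, ← sq, X_pow_eq_monomial]
  · simp only [pairExponent, pairCoeff, X, monomial_mul, Sum.elim_inr, mul_one, nsmul_eq_mul,
      Nat.cast_ofNat]
    rw [← map_ofNat C 2, C_mul_monomial, mul_one]

theorem sum_ltPair_smul_single_add_single (β : LtPair σ → ℕ) :
    ∑ p : LtPair σ, β p • (Finsupp.single p.1.1 1 + Finsupp.single p.1.2 1) =
      ∑ i, ∑ j, symmOfLtPair β i j • Finsupp.single j 1 := by
  -- Summing `bᵢⱼ • (eᵢ + eⱼ)` over all ordered pairs counts each side twice.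
  have key := sum_sum_eq_sum_diag_add_two_nsmul_sum_ltPair
    (fun i j => symmOfLtPair β i j • (Finsupp.single i 1 + Finsupp.single j 1))
    (fun i j => by rw [symmOfLtPair_comm, add_comm])
  have swap : ∑ i, ∑ j, symmOfLtPair β i j • Finsupp.single i (1 : ℕ) =
      ∑ i, ∑ j, symmOfLtPair β i j • Finsupp.single j 1 := by
    rw [sum_comm]
    exact sum_congr rfl fun i _ => sum_congr rfl fun j _ => by rw [symmOfLtPair_comm]
  have doubled : ∑ i, ∑ j, symmOfLtPair β i j • (Finsupp.single i 1 + Finsupp.single j 1) =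
      2 • ∑ i, ∑ j, symmOfLtPair β i j • Finsupp.single j (1 : ℕ) := by
    simp only [smul_add, sum_add_distrib, swap, two_nsmul]
  simp only [doubled, symmOfLtPair_self, zero_smul, sum_const_zero, zero_add,
    symmOfLtPair_ltPair] at key
  exact smul_right_injective _ two_ne_zero key.symm

theorem sum_smul_pairExponent_apply (c : σ ⊕ LtPair σ → ℕ) (j : σ) :
    (∑ t, c t • pairExponent t) j = 2 * c (.inl j) + ∑ i, symmOfLtPair (c ∘ .inr) i j := by
  rw [Fintype.sum_sum_type]
  simp only [pairExponent, Sum.elim_inl, Sum.elim_inr]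
  have pairs := sum_ltPair_smul_single_add_single (c ∘ .inr)
  simp only [Function.comp_apply] at pairs
  rw [Finsupp.add_apply, pairs]
  simp [Finsupp.single_apply, mul_comm]

noncomputable def solutions (k : σ → ℕ) (K : ℕ) : Finset (σ ⊕ LtPair σ → ℕ) :=
  (univ.piAntidiag K).filter
    (fun c => ∑ t, c t • pairExponent t = Finsupp.equivFunOnFinite.symm k)

theorem mem_solutions {k : σ → ℕ} {K : ℕ} (hk : ∑ j, k j = 2 * K) {c : σ ⊕ LtPair σ → ℕ} :
    c ∈ solutions k K ↔ ∀ j, k j = 2 * c (.inl j) + ∑ i, symmOfLtPair (c ∘ .inr) i j := by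
  have exponent_iff : ∑ t, c t • pairExponent t = Finsupp.equivFunOnFinite.symm k ↔
      ∀ j, k j = 2 * c (.inl j) + ∑ i, symmOfLtPair (c ∘ .inr) i j := by
    refine Finsupp.ext_iff.trans (forall_congr' fun j => ?_)
    rw [sum_smul_pairExponent_apply, Finsupp.coe_equivFunOnFinite_symm, eq_comm]
  rw [solutions, mem_filter, mem_piAntidiag, exponent_iff]
  refine ⟨fun h => h.2, fun h => ⟨⟨?_, fun _ _ => mem_univ _⟩, h⟩⟩
  -- `∑ c = K` is automatic: every monomial of `(∑ⱼ Xⱼ) ^ 2` has degree 2.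
  have degrees := congrArg Finsupp.degree (exponent_iff.mpr h)
  simp only [map_sum, map_nsmul, degree_pairExponent, smul_eq_mul, ← sum_mul] at degrees
  rw [Finsupp.degree_eq_sum] at degrees
  simp only [Finsupp.coe_equivFunOnFinite_symm, hk] at degrees
  change ∑ t, c t = K
  omega

theorem sum_solutions_eq_multinomial {k : σ → ℕ} {K : ℕ} (hk : ∑ j, k j = 2 * K) :
    ∑ c ∈ solutions k K, 2 ^ (∑ p, c (.inr p)) * Nat.multinomial univ c =
      Nat.multinomial univ k := by
  have coeff_eq := coeff_sum_X_pow_of_fintype (R := ℕ) (Finsupp.equivFunOnFinite.symm k) (2 * K)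
  rw [pow_mul, sum_X_sq, coeff_sum_monomial_pow, Finsupp.sum_fintype _ _ (fun _ => rfl),
    Finsupp.multinomial_eq_of_support_subset (subset_univ _)] at coeff_eq
  simp only [Finsupp.coe_equivFunOnFinite_symm, hk, if_true, Nat.cast_id] at coeff_eq
  rw [← coeff_eq, solutions]
  refine sum_congr rfl fun c _ => ?_
  simp [Fintype.prod_sum_type, pairCoeff, prod_pow_eq_pow_sum, mul_comm]

def solutionEquiv {k : σ → ℕ} {K : ℕ} (hk : ∑ j, k j = 2 * K) :
    {x : (σ → ℕ) × (σ → σ → ℕ) // (∀ i j, x.2 i j = x.2 j i) ∧ (∀ i, x.2 i i = 0) ∧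
        ∀ j, k j = 2 * x.1 j + ∑ i, x.2 i j} ≃ solutions k K where
  toFun x := ⟨Sum.elim x.1.1 (fun p => x.1.2 p.1.1 p.1.2), by
    obtain ⟨⟨a, b⟩, hb, hb₀, hab⟩ := x
    rw [mem_solutions hk]
    simpa [Function.comp_def, symmOfLtPair_restrict hb hb₀] using hab⟩
  invFun c := ⟨(c.1 ∘ .inl, symmOfLtPair (c.1 ∘ .inr)),
    symmOfLtPair_comm _, symmOfLtPair_self _, (mem_solutions hk).mp c.2⟩
  left_inv := by
    rintro ⟨⟨a, b⟩, hb, hb₀, _⟩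
    simp [Function.comp_def, symmOfLtPair_restrict hb hb₀]
  right_inv c := Subtype.ext (funext fun t => by cases t <;> simp)

theorem two_pow_mul_factorial_div_eq_multinomial (a : σ → ℕ) (b : σ → σ → ℕ) {K : ℕ}
    (hK : ∑ t, Sum.elim a (fun p : LtPair σ => b p.1.1 p.1.2) t = K) :
    (2 : ℝ) ^ (∑ pr ∈ univ.filter (fun pr : σ × σ => pr.1 < pr.2), b pr.1 pr.2) *
        K.factorial / (((∏ i, (a i).factorial) *
          ∏ pr ∈ univ.filter (fun pr : σ × σ => pr.1 < pr.2), (b pr.1 pr.2).factorial : ℕ) : ℝ) =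
      ((2 ^ (∑ p : LtPair σ, b p.1.1 p.1.2) *
        Nat.multinomial univ (Sum.elim a fun p : LtPair σ => b p.1.1 p.1.2) : ℕ) : ℝ) := by
  push_cast
  rw [Nat.cast_multinomial, hK, Fintype.prod_sum_type]
  simp only [Sum.elim_inl, Sum.elim_inr]
  rw [prod_ltPair_eq_prod_filter (fun pr => ((b pr.1 pr.2).factorial : ℝ)),
    sum_ltPair_eq_sum_filter (fun pr => b pr.1 pr.2)]
  ring

end LinearOrder

theorem stmt12_general (n K : ℕ) (k : Fin n → ℕ)
    (hsum : ∑ j, k j = 2 * K) :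
    (∑' x : {x : (Fin n → ℕ) × (Fin n → Fin n → ℕ) //
        (∀ i j, x.2 i j = x.2 j i) ∧ (∀ i, x.2 i i = 0) ∧
        ∀ j, k j = 2 * x.1 j + ∑ i, x.2 i j},
      ((2 : ℝ) ^ (∑ pr ∈ Finset.univ.filter (fun pr : Fin n × Fin n => pr.1 < pr.2),
          x.1.2 pr.1 pr.2) * (K.factorial : ℝ)) /
        ((((∏ i, (x.1.1 i).factorial) *
            ∏ pr ∈ Finset.univ.filter (fun pr : Fin n × Fin n => pr.1 < pr.2),
              (x.1.2 pr.1 pr.2).factorial : ℕ) : ℝ)))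
      = ((2 * K).factorial : ℝ) / ∏ j, ((k j).factorial : ℝ) := by
  let e := solutionEquiv hsum
  have := Fintype.ofEquiv _ e.symm
  let term : (Fin n ⊕ LtPair (Fin n) → ℕ) → ℕ := fun c =>
    2 ^ (∑ p, c (.inr p)) * Nat.multinomial univ c
  rw [tsum_fintype, Fintype.sum_equiv e _ (fun c => (term c.1 : ℝ)),
    sum_coe_sort (solutions k K) (fun c => (term c : ℝ)), ← Nat.cast_sum,
    sum_solutions_eq_multinomial hsum, Nat.cast_multinomial, hsum]
  rintro ⟨⟨a, b⟩, hx⟩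
  exact two_pow_mul_factorial_div_eq_multinomial a b
    (mem_piAntidiag.mp (mem_filter.mp (e ⟨(a, b), hx⟩).2).1).1

/-- Combinatorial identity: for positive integers `k₁,…,kₙ` with `k₁+⋯+kₙ = 2K`,
`Σ 2^B K!/(a₁!⋯aₙ! Π_{i<j} b_{ij}!) = (2K)!/(k₁!⋯kₙ!)`, the sum being over nonnegative
`a_j` and symmetric, diagonal-free `b_{ij}` with `k_j = 2a_j + Σ_{i≠j} b_{ij}`, and
`B = Σ_{i<j} b_{ij}`. -/
theorem stmt12 (n K : ℕ) (hK : 0 < K) (k : Fin n → ℕ) (hk : ∀ j, 0 < k j)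
    (hsum : ∑ j, k j = 2 * K) :
    (∑' x : {x : (Fin n → ℕ) × (Fin n → Fin n → ℕ) //
        (∀ i j, x.2 i j = x.2 j i) ∧ (∀ i, x.2 i i = 0) ∧
        ∀ j, k j = 2 * x.1 j + ∑ i, x.2 i j},
      ((2 : ℝ) ^ (∑ pr ∈ Finset.univ.filter (fun pr : Fin n × Fin n => pr.1 < pr.2),
          x.1.2 pr.1 pr.2) * (K.factorial : ℝ)) /
        ((((∏ i, (x.1.1 i).factorial) *
            ∏ pr ∈ Finset.univ.filter (fun pr : Fin n × Fin n => pr.1 < pr.2),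
              (x.1.2 pr.1 pr.2).factorial : ℕ) : ℝ)))
      = ((2 * K).factorial : ℝ) / ∏ j, ((k j).factorial : ℝ) :=
  stmt12_general n K k hsum
end

section
/- Let A be a finite set, E the set of undirected edges on A (including self-edges), and let {J_x : x ∈ A} be independent random signs with P(J_x = 1) = P(J_x = −1) = 1/2; set J_e = J_x J_y for an edge e with endpoints x,y (J_e = 1 for a self-edge). Then for any ρ ∈ ℂ^E, E[ exp( Σ_{e∈E} J_e ρ_e ) ] = Σ_{k̄ ∈ 𝒞} Π_{e∈E} ρ_e^{k_e}/k_e!, where 𝒞 is the set of currents: k̄ ∈ ℕ^E such that for every vertex x, the number n_x(k̄) = (1/2) Σ_e k_e n_e(x) is an integer (n_e(x) = 2 if e is a self-edge at x, 1 if e joins x to a different vertex, 0 otherwise). -/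
/-!
Each exponential is an absolutely convergent multiple power series,
`exp (∑ e, J_e ρ_e) = ∑_k ∏ e, (J_e ρ_e) ^ k_e / k_e!`, so it can be averaged over the
`2 ^ |A|` sign configurations term by term. Since `J_e = J_x J_y`, the sign part of the term
of index `k` is `∏ x, J_x ^ (∑ e, k_e n_e(x))`; averaging over independent signs factorises
over the vertices, and each factor is `1` when the exponent is even and `0` when it is odd.
-/

/-- Incidence count `n_e(x)`: `2` for a self-edge at `x`, `1` if `e` joins `x` to a
different vertex, `0` otherwise. -/
def edgeInc {A : Type*} [DecidableEq A] (x : A) : Sym2 A → ℕ :=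
  Sym2.lift ⟨fun a b => (if a = x then 1 else 0) + (if b = x then 1 else 0),
    fun a b => by exact add_comm _ _⟩

theorem hasSum_prod_pi_of_summable_norm {R : Type*} [NormedCommRing R] [CompleteSpace R]
    {ι κ : Type*} [Fintype ι] {f : ι → κ → R} {s : ι → R}
    (hs : ∀ i, HasSum (f i) (s i)) (hf : ∀ i, Summable fun n => ‖f i n‖) :
    HasSum (fun k : ι → κ => ∏ i, f i (k i)) (∏ i, s i) ∧
      Summable fun k : ι → κ => ‖∏ i, f i (k i)‖ := by
  have key := Fintype.induction_empty_option (P := fun ι _ => ∀ (f : ι → κ → R) (s : ι → R),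
    (∀ i, HasSum (f i) (s i)) → (∀ i, Summable fun n => ‖f i n‖) →
    HasSum (fun k : ι → κ => ∏ i, f i (k i)) (∏ i, s i) ∧
      Summable fun k : ι → κ => ‖∏ i, f i (k i)‖) ?of_equiv ?empty ?option ι
  · exact key f s hs hf
  case of_equiv =>
    intro α β _ e ih f s hs hf
    let _ : Fintype α := .ofEquiv β e.symm
    have reindex (k : α → κ) : ∏ b, f b (e.arrowCongr (.refl κ) k b) = ∏ a, f (e a) (k a) := by
      rw [← e.prod_comp]; simp
    obtain ⟨ih_sum, ih_norm⟩ := ih _ _ (fun a => hs (e a)) (fun a => hf (e a))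
    rw [← e.prod_comp]
    refine ⟨(e.arrowCongr (.refl κ)).hasSum_iff.mp ?_, (e.arrowCongr (.refl κ)).summable_iff.mp ?_⟩
    · simpa only [Function.comp_def, reindex] using ih_sum
    · simpa only [Function.comp_def, reindex] using ih_norm
  case empty =>
    exact fun f s _ _ => ⟨by simp, .of_finite⟩
  case option =>
    intro α _ ih f s hs hf
    obtain ⟨ih_sum, ih_norm⟩ := ih _ _ (fun a => hs (some a)) (fun a => hf (some a))
    let E := (Equiv.piOptionEquivProd (β := fun _ : Option α => κ)).symm
    have split (z : κ × (α → κ)) : ∏ i, f i (E z i) = f none z.1 * ∏ a, f (some a) (z.2 a) := by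
      simp [E, Fintype.prod_option, Equiv.piOptionEquivProd]
    rw [Fintype.prod_option]
    have hnorm := Summable.mul_norm (f := f none) (g := fun k : α → κ => ∏ a, f (some a) (k a))
      (hf none) ih_norm
    have hsum := (hs none).mul ih_sum hnorm.of_norm
    simp only [← split] at hsum hnorm
    exact ⟨E.hasSum_iff.mp hsum, E.summable_iff.mp hnorm⟩

theorem NormedSpace.hasSum_exp_sum {𝕂 : Type*} [NormedField 𝕂] [NormedAlgebra ℚ 𝕂]
    [CompleteSpace 𝕂] {ι : Type*} [Fintype ι] (g : ι → 𝕂) :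
    HasSum (fun k : ι → ℕ => ∏ i, g i ^ k i / (k i).factorial) (exp (∑ i, g i)) := by
  rw [exp_sum]
  exact (hasSum_prod_pi_of_summable_norm (fun i => expSeries_div_hasSum_exp (g i))
    fun i => norm_expSeries_div_summable (g i)).1

section Signs

variable {A : Type*} [Fintype A] [DecidableEq A]

theorem sym2_lift_mul_eq_prod_pow_edgeInc {M : Type*} [CommMonoid M] (σ : A → M) (e : Sym2 A) :
    Sym2.lift ⟨fun x y => σ x * σ y, fun _ _ => mul_comm _ _⟩ e = ∏ x, σ x ^ edgeInc x e := by
  induction e using Sym2.inductionOn with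
  | hf a b =>
    simp only [edgeInc, Sym2.lift_mk, pow_add, Finset.prod_mul_distrib, pow_ite, pow_one,
      pow_zero, Finset.prod_ite_eq, Finset.mem_univ, if_true]

theorem prod_sym2_lift_mul_pow {M : Type*} [CommMonoid M] (σ : A → M) (k : Sym2 A → ℕ) :
    ∏ e, Sym2.lift ⟨fun x y => σ x * σ y, fun _ _ => mul_comm _ _⟩ e ^ k e
      = ∏ x, σ x ^ ∑ e, k e * edgeInc x e := by
  simp_rw [sym2_lift_mul_eq_prod_pow_edgeInc, ← Finset.prod_pow, ← pow_mul]
  rw [Finset.prod_comm]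
  simp_rw [Finset.prod_pow_eq_pow_sum, mul_comm]

theorem hasSum_exp_sum_sym2_lift_mul (σ : A → ℂ) (ρ : Sym2 A → ℂ) :
    HasSum (fun k : Sym2 A → ℕ => (∏ x, σ x ^ ∑ e, k e * edgeInc x e) *
        ∏ e, ρ e ^ k e / (k e).factorial)
      (Complex.exp (∑ e, Sym2.lift ⟨fun x y => σ x * σ y, fun _ _ => mul_comm _ _⟩ e * ρ e)) := by
  simp only [← prod_sym2_lift_mul_pow, ← Finset.prod_mul_distrib, ← mul_div_assoc, ← mul_pow,
    Complex.exp_eq_exp_ℂ]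
  exact NormedSpace.hasSum_exp_sum _

theorem sum_bool_sign_pow {R : Type*} [Ring R] (n : ℕ) :
    ∑ b : Bool, (if b then (1 : R) else -1) ^ n = if 2 ∣ n then 2 else 0 := by
  rcases Nat.even_or_odd n with h | h
  · simp [h.neg_one_pow, even_iff_two_dvd.mp h, one_add_one_eq_two]
  · simp [h.neg_one_pow, h.not_two_dvd_nat]

theorem sum_prod_sign_pow_div_two_pow_card {R : Type*} [Field R] [NeZero (2 : R)] (n : A → ℕ) :
    (∑ J : A → Bool, ∏ x, (if J x then (1 : R) else -1) ^ n x) / 2 ^ Fintype.card A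
      = if ∀ x, 2 ∣ n x then 1 else 0 := by
  rw [← Fintype.prod_sum fun (x : A) (b : Bool) => (if b then (1 : R) else -1) ^ n x]
  simp_rw [sum_bool_sign_pow, Fintype.prod_ite_zero, Finset.prod_const, Finset.card_univ]
  split_ifs <;> simp [NeZero.ne]

end Signs

/-- The current/switching expansion for independent symmetric random signs:
`E[exp(Σ_e J_e ρ_e)] = Σ_{currents k} Π_e ρ_e^{k_e}/k_e!`. -/
theorem stmt13 {A : Type*} [Fintype A] [DecidableEq A] (ρ : Sym2 A → ℂ) :
    (∑ J : A → Bool,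
        Complex.exp (∑ e : Sym2 A,
          Sym2.lift ⟨fun x y => (if J x then (1 : ℂ) else -1) * (if J y then 1 else -1),
            fun x y => by exact mul_comm _ _⟩ e * ρ e)) / (2 : ℂ) ^ Fintype.card A
      = ∑' k : {k : Sym2 A → ℕ // ∀ x : A, 2 ∣ ∑ e : Sym2 A, k e * edgeInc x e},
          ∏ e : Sym2 A, ρ e ^ (k.1 e) / ((k.1 e).factorial : ℂ) := by
  have expand (J : A → Bool) :=
    hasSum_exp_sum_sym2_lift_mul (fun x => if J x then (1 : ℂ) else -1) ρ
  have average := (hasSum_sum fun J (_ : J ∈ Finset.univ) => expand J).div_const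
    (2 ^ Fintype.card A)
  simp only [← Finset.sum_mul, mul_div_right_comm, sum_prod_sign_pow_div_two_pow_card,
    boole_mul] at average
  refine ((hasSum_subtype_iff_indicator
    (f := fun k : Sym2 A → ℕ => ∏ e, ρ e ^ k e / ((k e).factorial : ℂ))
    (s := {k | ∀ x, 2 ∣ ∑ e, k e * edgeInc x e})).mpr ?_).tsum_eq.symm
  -- `Set.indicator` decides membership classically, `average` with the computable instance
  rwa [← Set.piecewise_eq_indicator]
end
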